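/- arXiv:2601.08195 — 7 statements merged into one kernel-verified Lean document; each statement's English description precedes it below -/
import Mathlib

section
/- Let n > 0 and â > 0 be real numbers, and set θ = (n(n+â))^{1/4} and k = (n/(n+â))^{1/4}. Define the 2×2 real matrices B = [[1,0],[0,−1]], C = [[cosh θ, k·sinh θ],[−(1/k)·sinh θ, −cosh θ]], and P = [[√k·cosh(θ/2), −√k·sinh(θ/2)],[−(1/√k)·sinh(θ/2), (1/√k)·cosh(θ/2)]]. Then det P = 1 (in particular P is invertible) and P·B·P⁻¹ = C. (Thus the holonomy matrix C(n) along the ℤ₂ gradient flow line is conjugate to the regular representation matrix B for every n, with explicit change-of-basis matrix P(n).) -/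
open Matrix

/-!
`P = diag(√k, 1/√k) · R(θ/2)`, where `R(t) = [[cosh t, -sinh t], [-sinh t, cosh t]]` has
determinant `cosh² t - sinh² t = 1` and inverse `R(-t)`. By the double angle formulas,
`R(t) · diag(1, -1) · R(t)⁻¹ = [[cosh 2t, sinh 2t], [-sinh 2t, -cosh 2t]]`, and conjugating by
`diag(√k, 1/√k)` multiplies the off-diagonal entries by `k` and `1/k`.
-/

open Real

noncomputable def scaledBoost (r t : ℝ) : Matrix (Fin 2) (Fin 2) ℝ :=
  !![r * cosh t, -r * sinh t; -(1 / r) * sinh t, (1 / r) * cosh t]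

noncomputable def holonomyMatrix (k θ : ℝ) : Matrix (Fin 2) (Fin 2) ℝ :=
  !![cosh θ, k * sinh θ; -(1 / k) * sinh θ, -cosh θ]

theorem det_scaledBoost {r : ℝ} (hr : r ≠ 0) (t : ℝ) : (scaledBoost r t).det = 1 := by
  rw [scaledBoost, det_fin_two_of]
  field_simp
  linear_combination cosh_sq_sub_sinh_sq t

theorem scaledBoost_mul_diag {r : ℝ} (hr : r ≠ 0) (t : ℝ) :
    scaledBoost r t * !![1, 0; 0, -1] = holonomyMatrix (r ^ 2) (2 * t) * scaledBoost r t := by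
  rw [scaledBoost, holonomyMatrix, cosh_two_mul, sinh_two_mul, mul_fin_two, mul_fin_two]
  congr 1
  simp only [vecCons_inj, and_true]
  refine ⟨⟨?_, ?_⟩, ?_, ?_⟩
  all_goals field_simp; rw [cosh_sq]; ring

theorem scaledBoost_conj_diag {r : ℝ} (hr : r ≠ 0) (t : ℝ) :
    scaledBoost r t * !![1, 0; 0, -1] * (scaledBoost r t)⁻¹ =
      holonomyMatrix (r ^ 2) (2 * t) := by
  have : Invertible (scaledBoost r t) :=
    invertibleOfIsUnitDet _ (by rw [det_scaledBoost hr]; exact isUnit_one)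
  rw [mul_inv_eq_iff_eq_mul_of_invertible, scaledBoost_mul_diag hr]

/-- For `n, â > 0`, with `θ = (n(n+â))^{1/4}` and `k = (n/(n+â))^{1/4}`, the explicit
change-of-basis matrix `P` has determinant 1 and conjugates the regular representation
matrix `B = diag(1,−1)` into the holonomy matrix `C`. -/
theorem holonomy_conjugate_Z2 (n a : ℝ) (hn : 0 < n) (ha : 0 < a) :
    let θ : ℝ := (n * (n + a)) ^ ((1 : ℝ) / 4)
    let k : ℝ := (n / (n + a)) ^ ((1 : ℝ) / 4)
    let B : Matrix (Fin 2) (Fin 2) ℝ := !![1, 0; 0, -1]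
    let C : Matrix (Fin 2) (Fin 2) ℝ :=
      !![Real.cosh θ, k * Real.sinh θ; -(1 / k) * Real.sinh θ, -Real.cosh θ]
    let P : Matrix (Fin 2) (Fin 2) ℝ :=
      !![Real.sqrt k * Real.cosh (θ / 2), -Real.sqrt k * Real.sinh (θ / 2);
         -(1 / Real.sqrt k) * Real.sinh (θ / 2), (1 / Real.sqrt k) * Real.cosh (θ / 2)]
    P.det = 1 ∧ P * B * P⁻¹ = C := by
  intro θ k B C P
  have hk : 0 < k := rpow_pos_of_pos (div_pos hn (by linarith)) _
  have hr : √k ≠ 0 := (sqrt_pos.mpr hk).ne'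
  have hconj := scaledBoost_conj_diag hr (θ / 2)
  rw [sq_sqrt hk.le, mul_div_cancel₀ θ two_ne_zero] at hconj
  exact ⟨det_scaledBoost hr (θ / 2), hconj⟩
end

section
/- Let a ∈ ℝ with a ≠ 0 and let C₀ > 0. Define S : ℝ → ℝ by S(t) = (−a² + √(a⁴ + 4C₀e^{8t}))/2. Then S(t) > 0 for all t, S satisfies the gradient-flow ODE S′(t) = 8·S(t)·(S(t)+a²)/(2·S(t)+a²) for all t, S(t) → 0 as t → −∞, and S(t) → ∞ as t → ∞. Equivalently, S(t)·(S(t)+a²) = C₀·e^{8t} for all t. -/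
open Filter Topology Real

/-! `S(t)` is the positive root `σ_b(x) = (-b + √(b² + 4x))/2` of `σ² + bσ = x`, with `b = a²` and
`x = C₀e^{8t}`. Differentiating `σ(σ + b) = x` gives `σ' = 1/(2σ + b)`, so the chain rule yields
`S' = 8C₀e^{8t}/(2S + a²) = 8S(S + a²)/(2S + a²)`; the limits come from `σ_b(0) = 0`, continuity of
`σ_b`, and `σ_b → ∞`. -/

noncomputable def posQuadRoot (b x : ℝ) : ℝ := (-b + √(b ^ 2 + 4 * x)) / 2

namespace posQuadRoot

variable {b x : ℝ}

theorem two_mul_add (b x : ℝ) : 2 * posQuadRoot b x + b = √(b ^ 2 + 4 * x) := by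
  rw [posQuadRoot]; ring

theorem mul_add_self (hx : 0 ≤ b ^ 2 + 4 * x) : posQuadRoot b x * (posQuadRoot b x + b) = x := by
  have hsq := sq_sqrt hx
  rw [posQuadRoot]
  linear_combination hsq / 4

theorem pos (hx : 0 < x) : 0 < posQuadRoot b x := by
  have : b < √(b ^ 2 + 4 * x) := lt_sqrt_of_sq_lt (by linarith)
  rw [posQuadRoot]; linarith

theorem apply_zero (hb : 0 ≤ b) : posQuadRoot b 0 = 0 := by
  simp [posQuadRoot, sqrt_sq hb]

theorem hasDerivAt (hx : 0 < b ^ 2 + 4 * x) :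
    HasDerivAt (posQuadRoot b) (2 * posQuadRoot b x + b)⁻¹ x := by
  have hD : HasDerivAt (fun y => b ^ 2 + 4 * y) 4 x := by
    simpa using ((hasDerivAt_id x).const_mul 4).const_add (b ^ 2)
  have h := (((hasDerivAt_sqrt hx.ne').comp x hD).const_add (-b)).div_const 2
  refine HasDerivAt.congr_deriv (f := posQuadRoot b) h ?_
  have hsqrt : √(b ^ 2 + 4 * x) ≠ 0 := (sqrt_pos.mpr hx).ne'
  rw [two_mul_add]
  field_simp
  ring

theorem continuous (b : ℝ) : Continuous (posQuadRoot b) := by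
  unfold posQuadRoot; fun_prop

theorem tendsto_nhds_zero (hb : 0 ≤ b) : Tendsto (posQuadRoot b) (𝓝 0) (𝓝 0) := by
  simpa [apply_zero hb] using (continuous b).tendsto 0

theorem tendsto_atTop (b : ℝ) : Tendsto (posQuadRoot b) atTop atTop := by
  have hD : Tendsto (fun x : ℝ => b ^ 2 + 4 * x) atTop atTop :=
    tendsto_atTop_add_const_left _ _ (tendsto_id.const_mul_atTop (by norm_num))
  exact (tendsto_atTop_add_const_left _ _ (tendsto_sqrt_atTop.comp hD)).atTop_div_const
    (by norm_num)

end posQuadRoot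

theorem hasDerivAt_const_mul_exp_mul (c k t : ℝ) :
    HasDerivAt (fun t => c * exp (k * t)) (k * (c * exp (k * t))) t := by
  have := (((hasDerivAt_id' t).const_mul k).exp).const_mul c
  exact this.congr_deriv (by ring)

theorem tendsto_const_mul_exp_mul_atBot {c k : ℝ} (hk : 0 < k) :
    Tendsto (fun t => c * exp (k * t)) atBot (𝓝 0) := by
  simpa using (tendsto_exp_atBot.comp (tendsto_id.const_mul_atBot hk)).const_mul c

theorem tendsto_const_mul_exp_mul_atTop {c k : ℝ} (hc : 0 < c) (hk : 0 < k) :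
    Tendsto (fun t => c * exp (k * t)) atTop atTop :=
  (tendsto_exp_atTop.comp (tendsto_id.const_mul_atTop hk)).const_mul_atTop hc

theorem reduced_gradient_flow_solution_Z2_general (a C₀ : ℝ) (hC : 0 < C₀) :
    let S : ℝ → ℝ := fun t => (-a ^ 2 + Real.sqrt (a ^ 4 + 4 * C₀ * Real.exp (8 * t))) / 2
    (∀ t, 0 < S t) ∧
    (∀ t, HasDerivAt S (8 * S t * (S t + a ^ 2) / (2 * S t + a ^ 2)) t) ∧
    Tendsto S atBot (nhds 0) ∧
    Tendsto S atTop atTop ∧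
    (∀ t, S t * (S t + a ^ 2) = C₀ * Real.exp (8 * t)) := by
  intro S
  set x : ℝ → ℝ := fun t => C₀ * exp (8 * t)
  have hS : S = posQuadRoot (a ^ 2) ∘ x := by
    funext t; simp only [S, x, Function.comp, posQuadRoot]; ring_nf
  have hx : ∀ t, 0 < x t := fun t => by positivity
  have hD : ∀ t, 0 < (a ^ 2) ^ 2 + 4 * x t := fun t => by linarith [hx t, sq_nonneg (a ^ 2)]
  have hS_mul : ∀ t, S t * (S t + a ^ 2) = x t := fun t => by
    rw [hS]; exact posQuadRoot.mul_add_self (hD t).le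
  refine ⟨fun t => hS ▸ posQuadRoot.pos (hx t), fun t => ?_, ?_, ?_, hS_mul⟩
  · have h := (posQuadRoot.hasDerivAt (hD t)).comp t (hasDerivAt_const_mul_exp_mul C₀ 8 t)
    have hSt : posQuadRoot (a ^ 2) (x t) = S t := by rw [hS]; rfl
    rw [← hS, hSt] at h
    refine h.congr_deriv ?_
    change _ * (8 * x t) = _
    rw [← hS_mul t]
    ring
  · rw [hS]
    exact (posQuadRoot.tendsto_nhds_zero (sq_nonneg a)).comp
      (tendsto_const_mul_exp_mul_atBot (by norm_num))
  · rw [hS]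
    exact (posQuadRoot.tendsto_atTop _).comp (tendsto_const_mul_exp_mul_atTop hC (by norm_num))

/-- The explicit solution `S(t) = (−a² + √(a⁴ + 4C₀e^{8t}))/2` of the reduced gradient-flow
equation of the A₁ ALE space: it is positive, satisfies
`S′ = 8·S·(S+a²)/(2S+a²)`, tends to 0 at −∞ and to ∞ at +∞, and satisfies
`S·(S+a²) = C₀·e^{8t}`. -/
theorem reduced_gradient_flow_solution_Z2 (a C₀ : ℝ) (ha : a ≠ 0) (hC : 0 < C₀) :
    let S : ℝ → ℝ := fun t => (-a ^ 2 + Real.sqrt (a ^ 4 + 4 * C₀ * Real.exp (8 * t))) / 2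
    (∀ t, 0 < S t) ∧
    (∀ t, HasDerivAt S (8 * S t * (S t + a ^ 2) / (2 * S t + a ^ 2)) t) ∧
    Tendsto S atBot (nhds 0) ∧
    Tendsto S atTop atTop ∧
    (∀ t, S t * (S t + a ^ 2) = C₀ * Real.exp (8 * t)) :=
  reduced_gradient_flow_solution_Z2_general a C₀ hC
end

section
/- Let N be a d×d complex matrix and η ∈ ℂ with η ≠ 0 such that N³ = η³·I. Let ω = exp(2πi/3), and define g₀(η) = (e^η + e^{ωη} + e^{ω²η})/3, g₁(η) = (e^η + ω²e^{ωη} + ωe^{ω²η})/3, g₂(η) = (e^η + ωe^{ωη} + ω²e^{ω²η})/3. Then exp(N) = g₀(η)·I + (g₁(η)/η)·N + (g₂(η)/η²)·N². -/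
/-!
If `x ^ n = t • 1`, then `x ^ (j + n * m) = t ^ m • x ^ j`, so grouping the exponential series
by residues mod `n` gives `exp x = ∑_{j < n} F_j(t) • x ^ j` with scalar series
`F_j(t) = ∑_m t ^ m / (j + n m)!`. For `n = 3` this applies both to `N` (with `t = η³`) and to
the scalars `c η` with `c³ = 1`, whence `exp (c η) = F₀ + c η F₁ + (c η)² F₂`; the discrete
Fourier transform over the cube roots of unity then picks out `g_j = η ^ j F_j`.
-/

open Matrix
open scoped Nat

open Finset in
theorem tsum_eq_sum_range_tsum_add_mul {R : Type*} [AddCommGroup R] [UniformSpace R]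
    [IsUniformAddGroup R] [CompleteSpace R] [T0Space R] {f : ℕ → R} (hf : Summable f)
    (n : ℕ) [NeZero n] : ∑' k, f k = ∑ j ∈ range n, ∑' m, f (j + n * m) := by
  rw [Nat.sumByResidueClasses hf n]
  exact sum_nbij ZMod.val (fun j _ => mem_coe.2 (mem_range.2 (ZMod.val_lt j)))
    (fun _ _ _ _ h => ZMod.val_injective n h)
    (fun k hk => ⟨k, mem_coe.2 (mem_univ _), ZMod.val_cast_of_lt (mem_range.1 hk)⟩)
    (fun _ _ => rfl)

section ExpOfRootOfScalar

variable {𝕂 : Type*} [RCLike 𝕂]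

noncomputable def expCoeffMod (n j : ℕ) (t : 𝕂) : 𝕂 := ∑' m : ℕ, t ^ m / (j + n * m)!

theorem summable_pow_div_factorial_add_mul (n j : ℕ) [NeZero n] (t : 𝕂) :
    Summable fun m : ℕ => t ^ m / (j + n * m)! := by
  refine Summable.of_norm_bounded (Real.summable_pow_div_factorial ‖t‖) fun m => ?_
  rw [norm_div, norm_pow, RCLike.norm_natCast]
  have hm : m ≤ j + n * m := le_add_left (Nat.le_mul_of_pos_left m (NeZero.pos n))
  gcongr

theorem NormedSpace.exp_eq_sum_expCoeffMod {A : Type*} [NormedRing A] [NormedAlgebra 𝕂 A]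
    [CompleteSpace A] {n : ℕ} [NeZero n] {x : A} {t : 𝕂} (hx : x ^ n = t • 1) :
    NormedSpace.exp x = ∑ j ∈ Finset.range n, expCoeffMod n j t • x ^ j := by
  have hpow (j m : ℕ) : x ^ (j + n * m) = t ^ m • x ^ j := by
    rw [pow_add, pow_mul, hx, smul_pow, one_pow, mul_smul_one]
  rw [congrFun (NormedSpace.exp_eq_tsum 𝕂) x,
    tsum_eq_sum_range_tsum_add_mul (NormedSpace.expSeries_summable' x) n]
  refine Finset.sum_congr rfl fun j _ => ?_
  rw [expCoeffMod, ← (summable_pow_div_factorial_add_mul n j t).tsum_smul_const]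
  congr 1 with m
  rw [hpow, smul_smul, div_eq_inv_mul]

theorem Matrix.exp_eq_sum_expCoeffMod {ι : Type*} [Fintype ι] [DecidableEq ι] {n : ℕ} [NeZero n]
    {M : Matrix ι ι 𝕂} {t : 𝕂} (hM : M ^ n = t • 1) :
    NormedSpace.exp M = ∑ j ∈ Finset.range n, expCoeffMod n j t • M ^ j := by
  open scoped Norms.Operator in exact NormedSpace.exp_eq_sum_expCoeffMod hM

end ExpOfRootOfScalar

/-- If `N³ = η³·I` with `η ≠ 0`, then
`exp(N) = g₀(η)·I + (g₁(η)/η)·N + (g₂(η)/η²)·N²`, where the `gᵢ` are the roots-of-unity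
filter components of the exponential with ω = e^{2πi/3}. -/
theorem exp_of_cube_scalar (d : ℕ) (N : Matrix (Fin d) (Fin d) ℂ) (η : ℂ) (hη : η ≠ 0)
    (hN : N ^ 3 = η ^ 3 • (1 : Matrix (Fin d) (Fin d) ℂ)) :
    let ω : ℂ := Complex.exp (2 * Real.pi * Complex.I / 3)
    let g₀ : ℂ := (Complex.exp η + Complex.exp (ω * η) + Complex.exp (ω ^ 2 * η)) / 3
    let g₁ : ℂ := (Complex.exp η + ω ^ 2 * Complex.exp (ω * η) + ω * Complex.exp (ω ^ 2 * η)) / 3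
    let g₂ : ℂ := (Complex.exp η + ω * Complex.exp (ω * η) + ω ^ 2 * Complex.exp (ω ^ 2 * η)) / 3
    NormedSpace.exp N = g₀ • (1 : Matrix (Fin d) (Fin d) ℂ) + (g₁ / η) • N + (g₂ / η ^ 2) • N ^ 2 := by
  intro ω g₀ g₁ g₂
  let F (j : ℕ) : ℂ := expCoeffMod 3 j (η ^ 3)
  have hω : IsPrimitiveRoot ω 3 := by
    simpa using Complex.isPrimitiveRoot_exp 3 (by norm_num)
  have hω₃ : ω ^ 3 = 1 := hω.pow_eq_one
  have hω₂ : 1 + ω + ω ^ 2 = 0 := by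
    simpa [Finset.sum_range_succ] using hω.geom_sum_eq_zero (by norm_num)
  have hexp (c : ℂ) (hc : c ^ 3 = 1) :
      Complex.exp (c * η) = F 0 + F 1 * (c * η) + F 2 * (c * η) ^ 2 := by
    rw [Complex.exp_eq_exp_ℂ, NormedSpace.exp_eq_sum_expCoeffMod (𝕂 := ℂ) (t := η ^ 3)
      (by rw [mul_pow, hc, one_mul, smul_eq_mul, mul_one])]
    simp [Finset.sum_range_succ, F]
  have h₁ := hexp 1 (one_pow 3)
  have h_ω := hexp ω hω₃
  have h_ω₂ := hexp (ω ^ 2) (by rw [← pow_mul, pow_mul', hω₃, one_pow])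
  rw [one_mul] at h₁
  have hg₀ : g₀ = F 0 := by
    linear_combination (h₁ + h_ω + h_ω₂) / 3 + (η * F 1 + η ^ 2 * F 2) / 3 * hω₂
      + η ^ 2 * F 2 * ω / 3 * hω₃
  have hg₁ : g₁ = η * F 1 := by
    linear_combination (h₁ + ω ^ 2 * h_ω + ω * h_ω₂) / 3 + (F 0 + η ^ 2 * F 2) / 3 * hω₂
      + (2 * η * F 1 + (ω + ω ^ 2) * η ^ 2 * F 2) / 3 * hω₃
  have hg₂ : g₂ = η ^ 2 * F 2 := by
    linear_combination (h₁ + ω * h_ω + ω ^ 2 * h_ω₂) / 3 + (F 0 + η * F 1) / 3 * hω₂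
      + (ω * η * F 1 + (ω ^ 3 + 2) * η ^ 2 * F 2) / 3 * hω₃
  rw [exp_eq_sum_expCoeffMod hN, hg₀, hg₁, hg₂, mul_div_cancel_left₀ _ hη,
    mul_div_cancel_left₀ _ (pow_ne_zero 2 hη)]
  simp [Finset.sum_range_succ, F]
end

section
/- Let A and B be d×d complex matrices and ω ∈ ℂ such that B·A = ω·(A·B). Then B·exp(A) = exp(ω·A)·B. -/
open Matrix

/-- If `B·A = ω·(A·B)`, then `B·exp(A) = exp(ω·A)·B`. -/
theorem mul_exp_of_comm_rel (d : ℕ) (A B : Matrix (Fin d) (Fin d) ℂ) (ω : ℂ)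
    (h : B * A = ω • (A * B)) :
    B * NormedSpace.exp A = NormedSpace.exp (ω • A) * B := by
  -- `exp` does not depend on the norm; any submultiplicative one gives a Banach algebra.
  let : NormedRing (Matrix (Fin d) (Fin d) ℂ) := Matrix.linftyOpNormedRing
  let : NormedAlgebra ℚ (Matrix (Fin d) (Fin d) ℂ) := Matrix.linftyOpNormedAlgebra
  let : NormedAlgebra ℂ (Matrix (Fin d) (Fin d) ℂ) := Matrix.linftyOpNormedAlgebra
  have : CompleteSpace (Matrix (Fin d) (Fin d) ℂ) := FiniteDimensional.complete ℂ _
  have hBA : SemiconjBy B A (ω • A) := h.trans (smul_mul_assoc ω A B).symm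
  exact hBA.exp_right
end

section
/- Let A and B be d×d complex matrices, and let ω ∈ ℂ satisfy ω³ = 1 and ω ≠ 1 (so that 1 − ω² ≠ 0). Suppose B·A = ω·(A·B), and set μ = (1 − ω²)⁻¹. Then exp(μ·A)·B·exp(A)·exp(−μ·A) = B. (Equivalently, P = exp(−μ·A) satisfies P·B·P⁻¹ = B·exp(A), yielding the explicit change-of-basis matrix P(t) = exp(ω·N(t)) conjugating the regular representation matrix to the holonomy matrix in the ℤ₃ case.) -/
/-!
Since `ω³ = 1`, the relation `B·A = ω·(A·B)` can be turned around to `A·B = ω²·(B·A)`, and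
`μ·(1 − ω²) = 1` then gives `B·((1 − μ)·A) = (−μ·A)·B`. An element intertwining two others
intertwines their exponentials, so `exp(μA)·B·exp((1 − μ)A) = B`, and
`exp(A)·exp(−μA) = exp((1 − μ)A)` because `A` commutes with its multiples.
-/

lemma sq_ne_one_of_pow_three_eq_one {M : Type*} [Monoid M] {ω : M} (hω3 : ω ^ 3 = 1)
    (hω1 : ω ≠ 1) : ω ^ 2 ≠ 1 := by
  intro h2
  exact hω1 (by rwa [pow_succ, h2, one_mul] at hω3)

lemma mul_eq_sq_smul_mul_of_mul_eq_smul_mul {R 𝔸 : Type*} [CommMonoid R] [Monoid 𝔸]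
    [MulAction R 𝔸] [IsScalarTower R 𝔸 𝔸] [SMulCommClass R 𝔸 𝔸] {ω : R} (hω3 : ω ^ 3 = 1)
    {A B : 𝔸} (h : B * A = ω • (A * B)) : A * B = ω ^ 2 • (B * A) := by
  rw [h, smul_smul, ← pow_succ, hω3, one_smul]

open NormedSpace in
theorem exp_smul_mul_mul_exp_mul_exp_neg_smul_eq_self {𝕂 𝔸 : Type*} [Field 𝕂] [NormedRing 𝔸]
    [NormedAlgebra ℚ 𝔸] [Algebra 𝕂 𝔸] [CompleteSpace 𝔸] {ω : 𝕂} (hω3 : ω ^ 3 = 1)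
    (hω1 : ω ≠ 1) {A B : 𝔸} (h : B * A = ω • (A * B)) :
    exp ((1 - ω ^ 2)⁻¹ • A) * B * exp A * exp (-((1 - ω ^ 2)⁻¹ • A)) = B := by
  have hμ : (1 - ω ^ 2)⁻¹ * (1 - ω ^ 2) = 1 :=
    inv_mul_cancel₀ (sub_ne_zero.mpr (sq_ne_one_of_pow_three_eq_one hω3 hω1).symm)
  generalize (1 - ω ^ 2)⁻¹ = μ at hμ ⊢
  have hsemi : SemiconjBy B ((1 - μ) • A) (-(μ • A)) := by
    have hcoeff : 1 - μ = -μ * ω ^ 2 := by linear_combination -hμ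
    rw [SemiconjBy, mul_smul_comm, hcoeff, ← smul_smul,
      ← mul_eq_sq_smul_mul_of_mul_eq_smul_mul hω3 h, neg_smul, neg_mul, smul_mul_assoc]
  have hexp : exp A * exp (-(μ • A)) = exp ((1 - μ) • A) := by
    rw [← exp_add_of_commute ((Commute.refl A).smul_right μ).neg_right]
    congr 1
    module
  rw [mul_assoc _ (exp A), hexp]
  simpa using hsemi.exp_neg_mul_mul_exp_eq_self

/-- If `ω³ = 1`, `ω ≠ 1`, `B·A = ω·(A·B)` and `μ = (1 − ω²)⁻¹`, then
`exp(μA)·B·exp(A)·exp(−μA) = B`. -/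
theorem change_of_basis_Z3 (d : ℕ) (A B : Matrix (Fin d) (Fin d) ℂ) (ω : ℂ)
    (hω3 : ω ^ 3 = 1) (hω1 : ω ≠ 1) (h : B * A = ω • (A * B)) :
    NormedSpace.exp ((1 - ω ^ 2)⁻¹ • A) * B * NormedSpace.exp A *
      NormedSpace.exp (-((1 - ω ^ 2)⁻¹ • A)) = B :=
  open scoped Matrix.Norms.Operator in
  exp_smul_mul_mul_exp_mul_exp_neg_smul_eq_self hω3 hω1 h
end

section
/- Let D, α, β be n×n complex matrices with D invertible, let ω ∈ ℂ with ω ≠ 0, and let v₁, v₂ ∈ ℂ. Suppose D⁻¹·α·D = ω·α, D⁻¹·β·D = ω⁻¹·β, and α·β = β·α. Define φ : ℤ → Matₙ(ℂ) by φ(k) = Dᵏ·exp((1 − ωᵏ)·v₁·α + (1 − ω⁻ᵏ)·v₂·β). Then φ(k + l) = φ(k)·φ(l) for all k, l ∈ ℤ. (This shows the holonomy assignment γ ↦ R(γ)·exp((v₁ − γ·v₁ coordinate)·α + (v₂ − γ·v₂ coordinate)·β) of the flat connection d + α dz₁ + β dz₂ is a group homomorphism in the cyclic case.) -/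
/-!
Conjugation by `Dˡ` scales `α` by `ωˡ` and `β` by `ω⁻ˡ`, so pushing `Dˡ` to the left through
`exp (aₖ α + bₖ β)` turns `φ k * φ l` into `D^(k+l) * exp (aₖ ωˡ α + bₖ ω⁻ˡ β) * exp (aₗ α + bₗ β)`.
Both exponents lie in the commutative span of `α` and `β`, so the exponentials merge, and the
coefficients add up since `(1 - ωᵏ) ωˡ + (1 - ωˡ) = 1 - ω^(k+l)`.
-/

open Matrix NormedSpace

namespace Units

variable {𝕂 R : Type*} [Semifield 𝕂] [Semiring R] [Algebra 𝕂 R]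

theorem inv_pow_mul_mul_pow_eq_smul (u : Rˣ) {a : R} {c : 𝕂} (h : ↑u⁻¹ * a * ↑u = c • a)
    (n : ℕ) : ↑(u ^ n)⁻¹ * a * ↑(u ^ n) = c ^ n • a := by
  induction n with
  | zero => simp
  | succ n ih =>
    calc ↑(u ^ (n + 1))⁻¹ * a * ↑(u ^ (n + 1)) = ↑u⁻¹ * (↑(u ^ n)⁻¹ * a * ↑(u ^ n)) * ↑u := by
          simp only [pow_succ, _root_.mul_inv_rev, Units.val_mul, mul_assoc]
      _ = c ^ (n + 1) • a := by rw [ih, mul_smul_comm, smul_mul_assoc, h, smul_smul, pow_succ]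

theorem inv_zpow_mul_mul_zpow_eq_smul (u : Rˣ) {a : R} {c : 𝕂} (hc : c ≠ 0)
    (h : ↑u⁻¹ * a * ↑u = c • a) (k : ℤ) : ↑(u ^ k)⁻¹ * a * ↑(u ^ k) = c ^ k • a := by
  have h' : ↑u⁻¹⁻¹ * a * ↑u⁻¹ = c⁻¹ • a := by
    rw [eq_inv_smul_iff₀ hc, inv_inv, ← smul_mul_assoc, ← mul_smul_comm, ← h]
    simp [mul_assoc]
  obtain ⟨n, rfl | rfl⟩ := k.eq_nat_or_neg
  · simpa using u.inv_pow_mul_mul_pow_eq_smul h n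
  · simpa [_root_.zpow_neg, _root_.inv_zpow] using u⁻¹.inv_pow_mul_mul_pow_eq_smul h' n

theorem inv_zpow_mul_smul_add_smul_mul_zpow (u : Rˣ) {α β : R} {ω : 𝕂} (hω : ω ≠ 0)
    (hα : ↑u⁻¹ * α * ↑u = ω • α) (hβ : ↑u⁻¹ * β * ↑u = ω⁻¹ • β) (s t : 𝕂) (l : ℤ) :
    ↑(u ^ l)⁻¹ * (s • α + t • β) * ↑(u ^ l) = (s * ω ^ l) • α + (t * ω ^ (-l)) • β := by
  rw [mul_add, add_mul, mul_smul_comm, mul_smul_comm, smul_mul_assoc, smul_mul_assoc,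
    u.inv_zpow_mul_mul_zpow_eq_smul hω hα, u.inv_zpow_mul_mul_zpow_eq_smul (inv_ne_zero hω) hβ,
    smul_smul, smul_smul, _root_.inv_zpow, ← _root_.zpow_neg]

end Units

namespace NormedSpace

variable {𝔸 : Type*} [NormedRing 𝔸] [NormedAlgebra ℚ 𝔸] [CompleteSpace 𝔸]

theorem exp_mul_units (u : 𝔸ˣ) (x : 𝔸) : exp x * u = u * exp (↑u⁻¹ * x * u) := by
  rw [exp_units_conj']
  simp [← mul_assoc]

end NormedSpace

section Holonomy

variable {𝕂 𝔸 : Type*} [Field 𝕂] [NormedRing 𝔸] [NormedAlgebra ℚ 𝔸] [CompleteSpace 𝔸]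
  [Algebra 𝕂 𝔸]

noncomputable def holonomy (u : 𝔸ˣ) (α β : 𝔸) (ω v₁ v₂ : 𝕂) (k : ℤ) : 𝔸 :=
  ↑(u ^ k) * exp (((1 - ω ^ k) * v₁) • α + ((1 - ω ^ (-k)) * v₂) • β)

theorem holonomy_add {u : 𝔸ˣ} {α β : 𝔸} {ω : 𝕂} (hω : ω ≠ 0) (hα : ↑u⁻¹ * α * ↑u = ω • α)
    (hβ : ↑u⁻¹ * β * ↑u = ω⁻¹ • β) (hαβ : Commute α β) (v₁ v₂ : 𝕂) (k l : ℤ) :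
    holonomy u α β ω v₁ v₂ (k + l) = holonomy u α β ω v₁ v₂ k * holonomy u α β ω v₁ v₂ l := by
  have hcomm (s t s' t' : 𝕂) : Commute (s • α + t • β) (s' • α + t' • β) := by
    refine .add_left (.add_right ?_ ?_) (.add_right ?_ ?_) <;> apply Commute.smul_left <;>
      apply Commute.smul_right
    exacts [.refl α, hαβ, hαβ.symm, .refl β]
  symm
  calc holonomy u α β ω v₁ v₂ k * holonomy u α β ω v₁ v₂ l
      = ↑(u ^ k) * ↑(u ^ l) * (exp (((1 - ω ^ k) * v₁ * ω ^ l) • α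
          + ((1 - ω ^ (-k)) * v₂ * ω ^ (-l)) • β)
          * exp (((1 - ω ^ l) * v₁) • α + ((1 - ω ^ (-l)) * v₂) • β)) := by
        rw [holonomy, holonomy, mul_assoc, ← mul_assoc (exp _), exp_mul_units,
          u.inv_zpow_mul_smul_add_smul_mul_zpow hω hα hβ]
        simp only [mul_assoc]
    _ = holonomy u α β ω v₁ v₂ (k + l) := by
        rw [← exp_add_of_commute (hcomm ..), holonomy, _root_.zpow_add, Units.val_mul,
          zpow_add₀ hω, neg_add, zpow_add₀ hω]
        congr 2
        module

end Holonomy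

/-- In the cyclic case, the holonomy assignment
`φ(k) = Dᵏ·exp((1 − ωᵏ)·v₁·α + (1 − ω⁻ᵏ)·v₂·β)` of the flat connection
`d + α dz₁ + β dz₂` is a group homomorphism: `φ(k+l) = φ(k)·φ(l)`. -/
theorem holonomy_is_homomorphism (n : ℕ) (D α β : Matrix (Fin n) (Fin n) ℂ)
    (hD : IsUnit D.det) (ω : ℂ) (hω : ω ≠ 0) (v₁ v₂ : ℂ)
    (hα : D⁻¹ * α * D = ω • α) (hβ : D⁻¹ * β * D = ω⁻¹ • β)
    (hcomm : α * β = β * α) :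
    let φ : ℤ → Matrix (Fin n) (Fin n) ℂ := fun k =>
      D ^ k * NormedSpace.exp (((1 - ω ^ k) * v₁) • α + ((1 - ω ^ (-k)) * v₂) • β)
    ∀ k l : ℤ, φ (k + l) = φ k * φ l := by
  intro φ k l
  obtain ⟨u, rfl⟩ := (isUnit_iff_isUnit_det D).mpr hD
  rw [← coe_units_inv] at hα hβ
  simp only [φ, ← coe_units_zpow]
  -- `exp` does not depend on the norm, so any Banach-algebra norm on matrices will do.
  open scoped Norms.Operator in
  exact holonomy_add hω hα hβ hcomm v₁ v₂ k l
end

section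
/- Let a, r, s ∈ ℝ with r ≠ 0, s ≠ 0, r² + s² = a², and set K = r²/s². Let C₀ > 0 and define S(t) = (−a² + √(a⁴ + 4C₀e^{8t}))/2 and u(t) = 4·S(t)/(2·S(t) + a²). Define c₁(t) = ln(K·S(t)/(K+1)) and c₂(t) = c₃(t) = ln(S(t)/(K+1)). Then for all t ∈ ℝ: c₁′(t) = 2·(1 + r²·e^{−c₁(t)})·u(t), c₂′(t) = 2·(1 + s²·e^{−c₂(t)})·u(t), and c₃′(t) = 2·(4 − u(t)). (These are the flow equations for a gradient flow line emanating from a generic point ((r,0),(0,s)) of the sphere of S¹-fixed points of the A₁ (ℤ₂) ALE space.) -/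
/-!
`S(t)` is the positive root of `x (x + a²) = C₀ e^{8t}`, so differentiating that relation gives
`S′ = S · 8 (S + a²) / (2S + a²)`. Each `cᵢ` is `log S` plus a constant, hence `cᵢ′ = 8 (S + a²) / (2S + a²)`,
and all three right-hand sides reduce to this rate: `2 (4 − u)` directly, and the other two because
`r² e^{−c₁} = s² e^{−c₂} = a² / S`, which is where `r² + s² = a²` enters.
-/

open Real

noncomputable def flowS (a C₀ t : ℝ) : ℝ :=
  (-a ^ 2 + √(a ^ 4 + 4 * C₀ * exp (8 * t))) / 2

lemma two_mul_flowS_add_sq (a C₀ t : ℝ) :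
    2 * flowS a C₀ t + a ^ 2 = √(a ^ 4 + 4 * C₀ * exp (8 * t)) := by
  unfold flowS; ring

section flowS

variable {a C₀ : ℝ}

lemma flowS_discr_pos (hC : 0 < C₀) (t : ℝ) : a ^ 4 < a ^ 4 + 4 * C₀ * exp (8 * t) :=
  lt_add_of_pos_right _ (by positivity)

lemma flowS_pos (hC : 0 < C₀) (t : ℝ) : 0 < flowS a C₀ t := by
  have h : a ^ 2 < √(a ^ 4 + 4 * C₀ * exp (8 * t)) :=
    (lt_sqrt (sq_nonneg a)).2 (by linear_combination flowS_discr_pos hC t)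
  unfold flowS; linarith

lemma flowS_mul_flowS_add (hC : 0 < C₀) (t : ℝ) :
    flowS a C₀ t * (flowS a C₀ t + a ^ 2) = C₀ * exp (8 * t) := by
  have h := sq_sqrt (by positivity : (0 : ℝ) ≤ a ^ 4 + 4 * C₀ * exp (8 * t))
  rw [← two_mul_flowS_add_sq] at h
  linear_combination h / 4

lemma hasDerivAt_flowS (hC : 0 < C₀) (t : ℝ) :
    HasDerivAt (flowS a C₀)
      (flowS a C₀ t * (8 * (flowS a C₀ t + a ^ 2) / (2 * flowS a C₀ t + a ^ 2))) t := by
  have hD : HasDerivAt (fun t ↦ a ^ 4 + 4 * C₀ * exp (8 * t)) (4 * C₀ * (exp (8 * t) * 8)) t := by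
    simpa using (((hasDerivAt_id t).const_mul 8).exp.const_mul (4 * C₀)).const_add (a ^ 4)
  have hD0 : a ^ 4 + 4 * C₀ * exp (8 * t) ≠ 0 := by
    linarith [flowS_discr_pos (a := a) hC t, pow_nonneg (sq_nonneg a) 2]
  refine (((hD.sqrt hD0).const_add (-a ^ 2)).div_const 2).congr_deriv ?_
  have hpos : 0 < 2 * flowS a C₀ t + a ^ 2 := by linarith [flowS_pos (a := a) hC t, sq_nonneg a]
  rw [← two_mul_flowS_add_sq]
  field_simp
  linear_combination -4 * flowS_mul_flowS_add (a := a) hC t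

end flowS

lemma HasDerivAt.log_div_const {f : ℝ → ℝ} {f' x : ℝ} (hf : HasDerivAt f f' x) (hfx : f x ≠ 0)
    {d : ℝ} (hd : d ≠ 0) : HasDerivAt (fun y ↦ Real.log (f y / d)) (f' / f x) x := by
  simpa [div_div_div_cancel_right₀ hd] using (hf.div_const d).log (div_ne_zero hfx hd)

lemma two_mul_one_add_div_mul_four_mul_div {S b : ℝ} (hS : S ≠ 0) (hd : 2 * S + b ≠ 0) :
    2 * (1 + b / S) * (4 * S / (2 * S + b)) = 8 * (S + b) / (2 * S + b) := by
  field_simp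
  ring

lemma two_mul_four_sub_four_mul_div {S b : ℝ} (hd : 2 * S + b ≠ 0) :
    2 * (4 - 4 * S / (2 * S + b)) = 8 * (S + b) / (2 * S + b) := by
  field_simp
  ring

/-- The flow equations for a gradient flow line emanating from a generic point
`((r,0),(0,s))` of the sphere of S¹-fixed points of the A₁ (ℤ₂) ALE space:
with `K = r²/s²`, `S(t) = (−a² + √(a⁴ + 4C₀e^{8t}))/2`, `u(t) = 4S(t)/(2S(t)+a²)`,
`c₁(t) = ln(K·S(t)/(K+1))` and `c₂(t) = c₃(t) = ln(S(t)/(K+1))`, one has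
`c₁′ = 2(1 + r²e^{−c₁})u`, `c₂′ = 2(1 + s²e^{−c₂})u`, and `c₃′ = 2(4 − u)`. -/
theorem generic_flow_equations_Z2 (a r s C₀ : ℝ) (hr : r ≠ 0) (hs : s ≠ 0)
    (hrs : r ^ 2 + s ^ 2 = a ^ 2) (hC : 0 < C₀) :
    let K : ℝ := r ^ 2 / s ^ 2
    let S : ℝ → ℝ := fun t => (-a ^ 2 + Real.sqrt (a ^ 4 + 4 * C₀ * Real.exp (8 * t))) / 2
    let u : ℝ → ℝ := fun t => 4 * S t / (2 * S t + a ^ 2)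
    let c₁ : ℝ → ℝ := fun t => Real.log (K * S t / (K + 1))
    let c₂ : ℝ → ℝ := fun t => Real.log (S t / (K + 1))
    let c₃ : ℝ → ℝ := c₂
    ∀ t : ℝ,
      HasDerivAt c₁ (2 * (1 + r ^ 2 * Real.exp (-c₁ t)) * u t) t ∧
      HasDerivAt c₂ (2 * (1 + s ^ 2 * Real.exp (-c₂ t)) * u t) t ∧
      HasDerivAt c₃ (2 * (4 - u t)) t := by
  intro K S u c₁ c₂ c₃ t
  have hS : 0 < S t := flowS_pos hC t
  have hd : 2 * S t + a ^ 2 ≠ 0 := by positivity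
  have hK : 0 < K := by positivity
  have hK1 : K + 1 = a ^ 2 / s ^ 2 := by simp only [K]; field_simp; linarith
  have hS' : HasDerivAt S (S t * (8 * (S t + a ^ 2) / (2 * S t + a ^ 2))) t :=
    hasDerivAt_flowS hC t
  have hlog₁ : HasDerivAt c₁ (8 * (S t + a ^ 2) / (2 * S t + a ^ 2)) t := by
    have h := HasDerivAt.log_div_const (hS'.const_mul K) (by positivity) (d := K + 1) (by positivity)
    rwa [mul_div_mul_left _ _ hK.ne', mul_div_cancel_left₀ _ hS.ne'] at h
  have hlog₂ : HasDerivAt c₂ (8 * (S t + a ^ 2) / (2 * S t + a ^ 2)) t := by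
    have h := hS'.log_div_const hS.ne' (d := K + 1) (by positivity)
    rwa [mul_div_cancel_left₀ _ hS.ne'] at h
  have he₁ : r ^ 2 * exp (-c₁ t) = a ^ 2 / S t := by
    rw [exp_neg, exp_log (by positivity), hK1]; simp only [K]; field_simp
  have he₂ : s ^ 2 * exp (-c₂ t) = a ^ 2 / S t := by
    rw [exp_neg, exp_log (by positivity), hK1]; field_simp
  refine ⟨hlog₁.congr_deriv ?_, hlog₂.congr_deriv ?_, hlog₂.congr_deriv ?_⟩
  · rw [he₁]; exact (two_mul_one_add_div_mul_four_mul_div hS.ne' hd).symm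
  · rw [he₂]; exact (two_mul_one_add_div_mul_four_mul_div hS.ne' hd).symm
  · exact (two_mul_four_sub_four_mul_div hd).symm
end
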